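/- Consider the linear time-varying ODE ẋ(t) = -M(t)x(t) + α(t)z_H on ℝ^{Nm}, where M(t) = K(L⊗I_m) + α(t)H̃ with L the Laplacian of a fixed connected graph, K > 0, H̃ = diag(h₁h₁ᵀ,…,h_Nh_Nᵀ) with rank of the stacked matrix H equal to m, α continuous positive with α(t) → 0 as t → ∞, and z_H ∈ ℝ^{Nm} fixed. Then every solution x(t) is bounded on [0,∞). -/

import Mathlib

open Matrix Filter
open scoped Kronecker

/-!
The matrix `P = L ⊗ I_m + H̃` is positive definite: `vᵀ(L ⊗ I_m)v` is a sum of weighted squared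
differences `w_ij ‖v_i - v_j‖²`, which vanishes only when all agents carry the same vector `c`
(the graph is connected), and then `vᵀH̃v = ‖H c‖²` vanishes only for `c = 0` (`rank H = m`).
By compactness of the unit sphere, `vᵀPv ≥ σ ‖v‖²` for some `σ > 0`. Once `α(t) ≤ K`,
`M(t) ≥ α(t) P`, hence `d/dt ‖x‖² ≤ 2 α(t) ‖x‖ (‖z_H‖ - σ ‖x‖)`, which is negative outside the
ball of radius `‖z_H‖ / σ + 1`; so `‖x‖` never climbs above that radius or its value at that
time, and before it `x` is bounded by continuity on a compact interval.
-/

theorem exists_pos_mul_norm_sq_le {E : Type*} [NormedAddCommGroup E] [NormedSpace ℝ E]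
    [FiniteDimensional ℝ E] {Q : E → ℝ} (hQ : Continuous Q)
    (hsmul : ∀ (c : ℝ) v, Q (c • v) = c ^ 2 * Q v) (hpos : ∀ v ≠ 0, 0 < Q v) :
    ∃ σ > 0, ∀ v, σ * ‖v‖ ^ 2 ≤ Q v := by
  have hQ0 : Q 0 = 0 := by simpa using hsmul 0 0
  rcases subsingleton_or_nontrivial E with hE | hE
  · exact ⟨1, one_pos, fun v => by simp [Subsingleton.elim v 0, hQ0]⟩
  obtain ⟨v₀, hv₀, hmin⟩ := (isCompact_sphere (0 : E) 1).exists_isMinOn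
    (NormedSpace.sphere_nonempty.2 zero_le_one) hQ.continuousOn
  have hv₀ne : v₀ ≠ 0 := ne_zero_of_mem_unit_sphere ⟨v₀, hv₀⟩
  refine ⟨Q v₀, hpos v₀ hv₀ne, fun v => ?_⟩
  rcases eq_or_ne v 0 with rfl | hv
  · simp [hQ0]
  have hnorm : 0 < ‖v‖ := norm_pos_iff.2 hv
  have hunit : ‖v‖⁻¹ • v ∈ Metric.sphere (0 : E) 1 := by
    simp [norm_smul, hnorm.ne']
  have := isMinOn_iff.1 hmin _ hunit
  rw [hsmul, inv_pow, le_inv_mul_iff₀ (by positivity)] at this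
  linarith

theorem exists_pos_mul_norm_sq_le_dotProduct_mulVec {ι : Type*} [Fintype ι]
    {A : Matrix ι ι ℝ} (hA : ∀ v ≠ 0, 0 < v ⬝ᵥ A *ᵥ v) :
    ∃ σ > 0, ∀ v, σ * ‖WithLp.toLp 2 v‖ ^ 2 ≤ v ⬝ᵥ A *ᵥ v := by
  obtain ⟨σ, hσ, hle⟩ := exists_pos_mul_norm_sq_le
    (Q := fun e : EuclideanSpace ℝ ι => e.ofLp ⬝ᵥ A *ᵥ e.ofLp) (by fun_prop)
    (fun c e => by simp [mulVec_smul, smul_eq_mul, sq, mul_assoc])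
    (fun e he => hA _ (by simpa using he))
  exact ⟨σ, hσ, fun v => hle (WithLp.toLp 2 v)⟩

theorem norm_le_max_of_inner_deriv_neg {E : Type*} [NormedAddCommGroup E]
    [InnerProductSpace ℝ E] {x x' : ℝ → E} {T R : ℝ} (hx : ∀ t ≥ T, HasDerivAt x (x' t) t)
    (hdiss : ∀ t ≥ T, R ≤ ‖x t‖ → inner ℝ (x t) (x' t) < 0) :
    ∀ t ≥ T, ‖x t‖ ≤ max ‖x T‖ R := by
  intro t ht
  set C := max ‖x T‖ R
  have hC : 0 ≤ C := (norm_nonneg _).trans (le_max_left _ _)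
  have hsq : ‖x t‖ ^ 2 ≤ C ^ 2 :=
    image_le_of_deriv_right_lt_deriv_boundary (f := (‖x ·‖ ^ 2)) (B := fun _ => C ^ 2)
      (fun s hs => ((hx s hs.1).continuousAt.norm.pow 2).continuousWithinAt)
      (fun s hs => (hx s hs.1).norm_sq.hasDerivWithinAt)
      (by gcongr; exact le_max_left _ _) (fun _ => hasDerivAt_const _ _)
      (fun s hs hCs => by
        have hR : R ≤ ‖x s‖ :=
          (le_max_right _ _).trans ((pow_left_inj₀ (norm_nonneg _) hC two_ne_zero).1 hCs).ge
        linarith [hdiss s hs.1 hR])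
      ⟨ht, le_rfl⟩
  exact (pow_le_pow_iff_left₀ (norm_nonneg _) hC two_ne_zero).1 hsq

theorem exists_bound_Ici_of_continuousOn_Icc {E : Type*} [SeminormedAddCommGroup E]
    {f : ℝ → E} {a T C : ℝ} (hf : ContinuousOn f (Set.Icc a T)) (hC : ∀ t ≥ T, ‖f t‖ ≤ C) :
    ∃ C', ∀ t ≥ a, ‖f t‖ ≤ C' := by
  obtain ⟨C₀, hC₀⟩ := isCompact_Icc.exists_bound_of_continuousOn hf
  refine ⟨max C₀ C, fun t ht => ?_⟩
  rcases le_total t T with htT | hTt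
  · exact (hC₀ t ⟨ht, htT⟩).trans (le_max_left _ _)
  · exact (hC t hTt).trans (le_max_right _ _)

theorem inner_neg_add_smul_lt_zero {E : Type*} [NormedAddCommGroup E] [InnerProductSpace ℝ E]
    {a σ : ℝ} {v w z : E} (ha : 0 < a) (hσ : 0 < σ) (hw : a * σ * ‖v‖ ^ 2 ≤ inner ℝ v w)
    (hv : ‖z‖ / σ + 1 ≤ ‖v‖) : inner ℝ v (-w + a • z) < 0 := by
  have hz : inner ℝ v z ≤ ‖v‖ * ‖z‖ := real_inner_le_norm v z
  have hσv : ‖z‖ + σ ≤ σ * ‖v‖ := by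
    rw [div_add_one hσ.ne', div_le_iff₀ hσ] at hv; linarith
  have hvpos : 0 < ‖v‖ := by
    have := div_nonneg (norm_nonneg z) hσ.le; linarith
  rw [inner_add_right, inner_neg_right, inner_smul_right]
  nlinarith [mul_pos ha hvpos, mul_pos (mul_pos ha hvpos) hσ]

def weightedLaplacian {ι : Type*} [Fintype ι] [DecidableEq ι] (w : ι → ι → ℝ) : Matrix ι ι ℝ :=
  of fun i j => if i = j then ∑ k, w i k else -w i j

section WeightedLaplacian

variable {ι : Type*} [Fintype ι] [DecidableEq ι] {w : ι → ι → ℝ}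

theorem dotProduct_weightedLaplacian_mulVec (hsymm : ∀ i j, w i j = w j i)
    (hdiag : ∀ i, w i i = 0) (u : ι → ℝ) :
    u ⬝ᵥ weightedLaplacian w *ᵥ u = (∑ i, ∑ j, w i j * (u i - u j) ^ 2) / 2 := by
  have hL : weightedLaplacian w = diagonal (fun i => ∑ k, w i k) - of w := by
    ext i j
    by_cases hij : i = j <;> simp [weightedLaplacian, hij, hdiag]
  have hdiagonal : u ⬝ᵥ diagonal (fun i => ∑ k, w i k) *ᵥ u = ∑ i, ∑ j, w i j * u i ^ 2 := by
    simp only [dotProduct, mulVec_diagonal, Finset.sum_mul, Finset.mul_sum]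
    exact Finset.sum_congr rfl fun i _ => Finset.sum_congr rfl fun j _ => by ring
  have hoff : u ⬝ᵥ of w *ᵥ u = ∑ i, ∑ j, w i j * (u i * u j) := by
    simp only [dotProduct, mulVec, of_apply, Finset.mul_sum]
    exact Finset.sum_congr rfl fun i _ => Finset.sum_congr rfl fun j _ => by ring
  have hswap : ∑ i, ∑ j, w i j * u j ^ 2 = ∑ i, ∑ j, w i j * u i ^ 2 := by
    rw [Finset.sum_comm]
    exact Finset.sum_congr rfl fun i _ => Finset.sum_congr rfl fun j _ => by rw [hsymm]
  have hexpand : ∑ i, ∑ j, w i j * (u i - u j) ^ 2 = ∑ i, ∑ j, w i j * u i ^ 2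
      + ∑ i, ∑ j, w i j * u j ^ 2 - 2 * ∑ i, ∑ j, w i j * (u i * u j) := by
    simp only [← Finset.sum_add_distrib, Finset.mul_sum, ← Finset.sum_sub_distrib]
    exact Finset.sum_congr rfl fun i _ => Finset.sum_congr rfl fun j _ => by ring
  rw [hL, sub_mulVec, dotProduct_sub, hdiagonal, hoff, hexpand, hswap]
  ring

theorem dotProduct_weightedLaplacian_mulVec_nonneg (hsymm : ∀ i j, w i j = w j i)
    (hnonneg : ∀ i j, 0 ≤ w i j) (hdiag : ∀ i, w i i = 0) (u : ι → ℝ) :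
    0 ≤ u ⬝ᵥ weightedLaplacian w *ᵥ u := by
  rw [dotProduct_weightedLaplacian_mulVec hsymm hdiag]
  exact div_nonneg (Finset.sum_nonneg fun i _ => Finset.sum_nonneg fun j _ =>
    mul_nonneg (hnonneg i j) (sq_nonneg _)) zero_le_two

theorem eq_of_dotProduct_weightedLaplacian_mulVec_eq_zero {G : SimpleGraph ι}
    (hsymm : ∀ i j, w i j = w j i) (hnonneg : ∀ i j, 0 ≤ w i j) (hdiag : ∀ i, w i i = 0)
    (hG : ∀ i j, G.Adj i j → 0 < w i j) (hconn : G.Connected) {u : ι → ℝ}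
    (hu : u ⬝ᵥ weightedLaplacian w *ᵥ u = 0) (i j : ι) : u i = u j := by
  rw [dotProduct_weightedLaplacian_mulVec hsymm hdiag] at hu
  have hterms : ∀ i j, w i j * (u i - u j) ^ 2 = 0 := by
    have hnn : ∀ i j, 0 ≤ w i j * (u i - u j) ^ 2 := fun i j =>
      mul_nonneg (hnonneg i j) (sq_nonneg _)
    intro i j
    have hrow := (Finset.sum_eq_zero_iff_of_nonneg fun i _ => Finset.sum_nonneg fun j _ =>
      hnn i j).1 (by linarith) i (Finset.mem_univ i)
    exact (Finset.sum_eq_zero_iff_of_nonneg fun j _ => hnn i j).1 hrow j (Finset.mem_univ j)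
  obtain ⟨p⟩ := hconn.preconnected i j
  induction p with
  | nil => rfl
  | @cons a b _ hadj _ ih =>
    rw [← ih]
    simpa [sub_eq_zero, (hG a b hadj).ne'] using hterms a b

end WeightedLaplacian

theorem dotProduct_kronecker_one_mulVec {R ι κ : Type*} [CommSemiring R] [Fintype ι]
    [Fintype κ] [DecidableEq κ] (A : Matrix ι ι R) (v : ι × κ → R) :
    v ⬝ᵥ (A ⊗ₖ (1 : Matrix κ κ R)) *ᵥ v = ∑ b, (fun i => v (i, b)) ⬝ᵥ A *ᵥ fun i => v (i, b) := by
  simp only [dotProduct, mulVec, kroneckerMap_apply, one_apply, mul_ite, mul_one, mul_zero,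
    ite_mul, zero_mul, Fintype.sum_prod_type, Finset.sum_ite_eq, Finset.mem_univ, if_true]
  rw [Finset.sum_comm]

-- `diag(h₁h₁ᵀ, …, h_N h_Nᵀ)`; unlike `Matrix.blockDiagonal`, the block index comes first.
def blockOuter {ι κ : Type*} [DecidableEq ι] (h : ι → κ → ℝ) : Matrix (ι × κ) (ι × κ) ℝ :=
  of fun p q => if p.1 = q.1 then h p.1 p.2 * h p.1 q.2 else 0

theorem dotProduct_blockOuter_mulVec {ι κ : Type*} [Fintype ι] [DecidableEq ι] [Fintype κ]
    (h : ι → κ → ℝ) (v : ι × κ → ℝ) :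
    v ⬝ᵥ blockOuter h *ᵥ v = ∑ i, (h i ⬝ᵥ fun b => v (i, b)) ^ 2 := by
  simp only [dotProduct, mulVec, blockOuter, of_apply, ite_mul, zero_mul,
    Fintype.sum_prod_type, Finset.sum_ite_irrel, Finset.sum_const_zero, Finset.sum_ite_eq,
    Finset.mem_univ, if_true, sq, Finset.sum_mul, Finset.mul_sum]
  refine Finset.sum_congr rfl fun i _ => Finset.sum_comm.trans ?_
  exact Finset.sum_congr rfl fun a _ => Finset.sum_congr rfl fun b _ => by ring

theorem mulVec_injective_of_rank_eq {ι κ : Type*} [Fintype ι] [Fintype κ] {A : Matrix ι κ ℝ}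
    (hA : A.rank = Fintype.card κ) : Function.Injective A.mulVec := by
  have hker := LinearMap.finrank_range_add_finrank_ker A.mulVecLin
  rw [← rank, hA, Module.finrank_fintype_fun_eq_card, add_eq_left,
    Submodule.finrank_eq_zero, LinearMap.ker_eq_bot] at hker
  exact hker

theorem dotProduct_weightedLaplacian_kronecker_one_mulVec_nonneg {ι κ : Type*}
    [Fintype ι] [DecidableEq ι] [Fintype κ] [DecidableEq κ] {w : ι → ι → ℝ}
    (hsymm : ∀ i j, w i j = w j i) (hnonneg : ∀ i j, 0 ≤ w i j) (hdiag : ∀ i, w i i = 0)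
    (v : ι × κ → ℝ) : 0 ≤ v ⬝ᵥ (weightedLaplacian w ⊗ₖ (1 : Matrix κ κ ℝ)) *ᵥ v := by
  rw [dotProduct_kronecker_one_mulVec]
  exact Finset.sum_nonneg fun b _ =>
    dotProduct_weightedLaplacian_mulVec_nonneg hsymm hnonneg hdiag _

theorem dotProduct_weightedLaplacian_kronecker_one_add_blockOuter_mulVec_pos {ι κ : Type*}
    [Fintype ι] [DecidableEq ι] [Fintype κ] [DecidableEq κ] {w : ι → ι → ℝ}
    {G : SimpleGraph ι} {h : ι → κ → ℝ} (hsymm : ∀ i j, w i j = w j i)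
    (hnonneg : ∀ i j, 0 ≤ w i j) (hdiag : ∀ i, w i i = 0) (hG : ∀ i j, G.Adj i j → 0 < w i j)
    (hconn : G.Connected) (hh : Function.Injective (of h).mulVec) {v : ι × κ → ℝ}
    (hv : v ≠ 0) :
    0 < v ⬝ᵥ (weightedLaplacian w ⊗ₖ (1 : Matrix κ κ ℝ) + blockOuter h) *ᵥ v := by
  obtain ⟨i₀⟩ := hconn.nonempty
  have hcolumn_nonneg :
      ∀ b, 0 ≤ (fun i => v (i, b)) ⬝ᵥ weightedLaplacian w *ᵥ fun i => v (i, b) := fun b =>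
    dotProduct_weightedLaplacian_mulVec_nonneg hsymm hnonneg hdiag _
  have hL_nonneg := dotProduct_weightedLaplacian_kronecker_one_mulVec_nonneg (κ := κ) hsymm
    hnonneg hdiag v
  have hH_nonneg : 0 ≤ v ⬝ᵥ blockOuter h *ᵥ v := by
    rw [dotProduct_blockOuter_mulVec]
    positivity
  rw [add_mulVec, dotProduct_add]
  refine (add_nonneg hL_nonneg hH_nonneg).lt_of_ne fun hzero => hv ?_
  have hL_zero : v ⬝ᵥ (weightedLaplacian w ⊗ₖ (1 : Matrix κ κ ℝ)) *ᵥ v = 0 := by linarith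
  have hH_zero : v ⬝ᵥ blockOuter h *ᵥ v = 0 := by linarith
  rw [dotProduct_kronecker_one_mulVec,
    Finset.sum_eq_zero_iff_of_nonneg fun b _ => hcolumn_nonneg b] at hL_zero
  rw [dotProduct_blockOuter_mulVec,
    Finset.sum_eq_zero_iff_of_nonneg fun i _ => sq_nonneg _] at hH_zero
  have hcolumn : ∀ i b, v (i, b) = v (i₀, b) := fun i b =>
    eq_of_dotProduct_weightedLaplacian_mulVec_eq_zero hsymm hnonneg hdiag hG hconn
      (hL_zero b (Finset.mem_univ b)) i i₀
  have hker : of h *ᵥ (fun b => v (i₀, b)) = of h *ᵥ 0 := by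
    ext i
    have := pow_eq_zero_iff two_ne_zero |>.1 (hH_zero i (Finset.mem_univ i))
    simp_rw [hcolumn i] at this
    simpa [mulVec] using this
  ext ⟨i, b⟩
  rw [hcolumn i b]
  exact congrFun (hh hker) b

theorem mul_mul_norm_sq_le_inner_smul_add_smul_mulVec {ι : Type*} [Fintype ι]
    {A B : Matrix ι ι ℝ} {a K σ : ℝ} (ha : 0 ≤ a) (haK : a ≤ K) (hA : ∀ v, 0 ≤ v ⬝ᵥ A *ᵥ v)
    (hAB : ∀ v, σ * ‖WithLp.toLp 2 v‖ ^ 2 ≤ v ⬝ᵥ (A + B) *ᵥ v) (v : ι → ℝ) :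
    a * σ * ‖WithLp.toLp 2 v‖ ^ 2
      ≤ inner ℝ (WithLp.toLp 2 v) (WithLp.toLp 2 ((K • A + a • B) *ᵥ v)) := by
  calc a * σ * ‖WithLp.toLp 2 v‖ ^ 2 ≤ a * (v ⬝ᵥ (A + B) *ᵥ v) := by
        rw [mul_assoc]
        exact mul_le_mul_of_nonneg_left (hAB v) ha
    _ ≤ v ⬝ᵥ (K • A + a • B) *ᵥ v := by
        simp only [add_mulVec, smul_mulVec, dotProduct_add, dotProduct_smul, smul_eq_mul]
        nlinarith [hA v]
    _ = inner ℝ (WithLp.toLp 2 v) (WithLp.toLp 2 ((K • A + a • B) *ᵥ v)) := by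
        simp [EuclideanSpace.inner_toLp_toLp, dotProduct_comm]

theorem flow_state_bounded_general
    (N m : ℕ)
    (w : Fin N → Fin N → ℝ)
    (hsymm : ∀ i j, w i j = w j i)
    (hnonneg : ∀ i j, 0 ≤ w i j)
    (hdiag : ∀ i, w i i = 0)
    (G : SimpleGraph (Fin N))
    (hG : ∀ i j, G.Adj i j ↔ i ≠ j ∧ 0 < w i j)
    (hconn : G.Connected)
    (L : Matrix (Fin N) (Fin N) ℝ)
    (hL : ∀ i j, L i j = if i = j then ∑ k, w i k else -(w i j))
    (h : Fin N → (Fin m → ℝ))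
    (H : Matrix (Fin N) (Fin m) ℝ) (hHrows : ∀ i a, H i a = h i a)
    (hrank : H.rank = m)
    (Htilde : Matrix (Fin N × Fin m) (Fin N × Fin m) ℝ)
    (hHtilde : ∀ p q, Htilde p q = if p.1 = q.1 then h p.1 p.2 * h p.1 q.2 else 0)
    (K : ℝ) (hK : 0 < K)
    (α : ℝ → ℝ) (hαpos : ∀ t ≥ (0:ℝ), 0 < α t)
    (hα0 : Tendsto α atTop (nhds 0))
    (zH : Fin N × Fin m → ℝ)
    (M : ℝ → Matrix (Fin N × Fin m) (Fin N × Fin m) ℝ)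
    (hM : ∀ t, M t = K • (L ⊗ₖ (1 : Matrix (Fin m) (Fin m) ℝ)) + α t • Htilde)
    (x : ℝ → (Fin N × Fin m → ℝ))
    (hx : ∀ t ≥ (0:ℝ), HasDerivAt x (-(M t).mulVec (x t) + α t • zH) t) :
    ∃ C : ℝ, ∀ t ≥ (0:ℝ), ‖x t‖ ≤ C := by
  have hL' : L = weightedLaplacian w := by ext i j; exact hL i j
  have hHtilde' : Htilde = blockOuter h := by ext p q; exact hHtilde p q
  have hH : H = of h := by ext i a; exact hHrows i a
  subst L Htilde H
  obtain ⟨σ, hσ, hP⟩ := exists_pos_mul_norm_sq_le_dotProduct_mulVec fun v hv =>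
    dotProduct_weightedLaplacian_kronecker_one_add_blockOuter_mulVec_pos hsymm hnonneg hdiag
      (fun i j hij => ((hG i j).1 hij).2) hconn
      (mulVec_injective_of_rank_eq (by rw [hrank, Fintype.card_fin])) hv
  obtain ⟨T, hT, hαK⟩ : ∃ T ≥ 0, ∀ t ≥ T, α t ≤ K := by
    obtain ⟨T, hαK⟩ := eventually_atTop.1 (hα0.eventually (ge_mem_nhds hK))
    exact ⟨max T 0, le_max_right _ _, fun t ht => hαK t (le_of_max_le_left ht)⟩
  set R := ‖WithLp.toLp 2 zH‖ / σ + 1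
  have hdiss : ∀ t ≥ T, R ≤ ‖WithLp.toLp 2 (x t)‖ →
      inner ℝ (WithLp.toLp 2 (x t)) (WithLp.toLp 2 (-(M t *ᵥ x t) + α t • zH)) < 0 := by
    intro t ht hR
    rw [WithLp.toLp_add, WithLp.toLp_neg, WithLp.toLp_smul]
    exact inner_neg_add_smul_lt_zero (hαpos t (hT.trans ht)) hσ
      (hM t ▸ mul_mul_norm_sq_le_inner_smul_add_smul_mulVec (hαpos t (hT.trans ht)).le (hαK t ht)
        (dotProduct_weightedLaplacian_kronecker_one_mulVec_nonneg hsymm hnonneg hdiag) hP (x t)) hR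
  have hfar := norm_le_max_of_inner_deriv_neg (fun t ht =>
    (PiLp.continuousLinearEquiv 2 ℝ _).symm.hasFDerivAt.comp_hasDerivAt t (hx t (hT.trans ht)))
    hdiss
  exact exists_bound_Ici_of_continuousOn_Icc (T := T)
    (fun t ht => (hx t ht.1).continuousAt.continuousWithinAt) fun t ht =>
      ((pi_norm_le_iff_of_nonneg (norm_nonneg _)).2 fun p =>
        PiLp.norm_apply_le (WithLp.toLp 2 (x t)) p).trans (hfar t ht)

/-- Every solution of the vectorized flow `ẋ = -M(t) x + α(t) z_H`, with
`M(t) = K (L ⊗ I_m) + α(t) H̃`, connected graph, full-rank stacked matrix `H`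
and `α(t) → 0`, is bounded on `[0, ∞)`. -/
theorem flow_state_bounded
    (N m : ℕ)
    (w : Fin N → Fin N → ℝ)
    (hsymm : ∀ i j, w i j = w j i)
    (hnonneg : ∀ i j, 0 ≤ w i j)
    (hdiag : ∀ i, w i i = 0)
    (G : SimpleGraph (Fin N))
    (hG : ∀ i j, G.Adj i j ↔ i ≠ j ∧ 0 < w i j)
    (hconn : G.Connected)
    (L : Matrix (Fin N) (Fin N) ℝ)
    (hL : ∀ i j, L i j = if i = j then ∑ k, w i k else -(w i j))
    (h : Fin N → (Fin m → ℝ))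
    (H : Matrix (Fin N) (Fin m) ℝ) (hHrows : ∀ i a, H i a = h i a)
    (hrank : H.rank = m)
    (Htilde : Matrix (Fin N × Fin m) (Fin N × Fin m) ℝ)
    (hHtilde : ∀ p q, Htilde p q = if p.1 = q.1 then h p.1 p.2 * h p.1 q.2 else 0)
    (K : ℝ) (hK : 0 < K)
    (α : ℝ → ℝ) (hαcont : Continuous α) (hαpos : ∀ t ≥ (0:ℝ), 0 < α t)
    (hα0 : Tendsto α atTop (nhds 0))
    (zH : Fin N × Fin m → ℝ)
    (M : ℝ → Matrix (Fin N × Fin m) (Fin N × Fin m) ℝ)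
    (hM : ∀ t, M t = K • (L ⊗ₖ (1 : Matrix (Fin m) (Fin m) ℝ)) + α t • Htilde)
    (x : ℝ → (Fin N × Fin m → ℝ))
    (hx : ∀ t ≥ (0:ℝ), HasDerivAt x (-(M t).mulVec (x t) + α t • zH) t) :
    ∃ C : ℝ, ∀ t ≥ (0:ℝ), ‖x t‖ ≤ C :=
  flow_state_bounded_general N m w hsymm hnonneg hdiag G hG hconn L hL h H hHrows hrank Htilde
    hHtilde K hK α hαpos hα0 zH M hM x hx
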